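/- Let B ∈ ℝ^{r×n} and let S ⊆ ℝⁿ be a linear subspace. The following are equivalent: (i) the set of maps m(B) is injective with respect to S; (ii) 0 ∉ q(B)(S \ {0}); (iii) σ(ker(B)) ∩ σ(S \ {0}) = ∅, i.e. no nonzero vector of S has the same componentwise sign pattern as some vector of ker(B). -/

import Mathlib

/-- The positive orthant `ℝⁿ_{>0}`. -/
def posOrth (n : ℕ) : Set (Fin n → ℝ) := {x | ∀ i, 0 < x i}

/-- The generalized monomial map `μ_B : x ↦ x^B`, `(x^B)_j = ∏ᵢ xᵢ^{B j i}`. -/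
noncomputable def monMap {n r : ℕ} (B : Matrix (Fin r) (Fin n) ℝ) (x : Fin n → ℝ) :
    Fin r → ℝ :=
  fun j => ∏ i, x i ^ B j i

/-- `m(B) = {x ↦ κ ∗ x^B : κ ∈ ℝʳ_{>0}}`. -/
noncomputable def mSet {n r : ℕ} (B : Matrix (Fin r) (Fin n) ℝ) :
    Set ((Fin n → ℝ) → (Fin r → ℝ)) :=
  {G | ∃ κ : Fin r → ℝ, (∀ j, 0 < κ j) ∧ G = fun x => fun j => κ j * monMap B x j}

/-- `q(B) = {diag(κ) B diag(λ) : κ ∈ ℝʳ_{>0}, λ ∈ ℝⁿ_{>0}}`. -/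
def qSet {n r : ℕ} (B : Matrix (Fin r) (Fin n) ℝ) : Set (Matrix (Fin r) (Fin n) ℝ) :=
  {M | ∃ κ : Fin r → ℝ, ∃ lam : Fin n → ℝ, (∀ j, 0 < κ j) ∧ (∀ i, 0 < lam i) ∧
    M = Matrix.diagonal κ * B * Matrix.diagonal lam}

/-- `ℬ(T) = {M z : M ∈ ℬ, z ∈ T}`. -/
def matImage {n r : ℕ} (ℬ : Set (Matrix (Fin r) (Fin n) ℝ)) (T : Set (Fin n → ℝ)) :
    Set (Fin r → ℝ) :=
  {w | ∃ M ∈ ℬ, ∃ z ∈ T, w = M.mulVec z}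

/-- `𝒢` is injective with respect to `S`. -/
def InjOnCosets {n r : ℕ} (X : Set (Fin n → ℝ)) (S : Submodule ℝ (Fin n → ℝ))
    (𝒢 : Set ((Fin n → ℝ) → (Fin r → ℝ))) : Prop :=
  ∀ G ∈ 𝒢, ∀ x₀ ∈ X, Set.InjOn G ({z | z - x₀ ∈ S} ∩ X)

/-- `σ(T)`: the set of componentwise sign vectors of elements of `T`. -/
noncomputable def sgnSet {n : ℕ} (T : Set (Fin n → ℝ)) : Set (Fin n → SignType) :=
  (fun x i => SignType.sign (x i)) '' T

/-!
Taking logarithms turns `κ ∗ x^B = κ ∗ y^B` into `B (log x - log y) = 0`, and since `log` is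
strictly increasing, `log x - log y` has the same sign pattern as `x - y`. Conversely every pair of
real numbers `u, v` of equal sign is realised as `u = a - b`, `v = log a - log b` with `a, b > 0`.
So `m(B)` fails to be injective on some coset of `S` exactly when a vector of `ker B` has the
sign pattern of a nonzero vector of `S`. Likewise, a vector has the sign pattern of `z` exactly
when it is `λ ∗ z` for some positive `λ`, which identifies (ii) with (iii).
-/

open SignType (sign)
open Matrix

lemma exists_pos_mul_eq_of_sign_eq {u v : ℝ} (h : sign u = sign v) :
    ∃ c, 0 < c ∧ v = c * u := by
  rcases lt_trichotomy u 0 with hu | rfl | hu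
  · have hv : v < 0 := sign_eq_neg_one_iff.mp (h ▸ sign_neg hu)
    exact ⟨v / u, div_pos_of_neg_of_neg hv hu, (div_mul_cancel₀ v hu.ne).symm⟩
  · exact ⟨1, one_pos, by simpa using h.symm⟩
  · have hv : 0 < v := sign_eq_one_iff.mp (h ▸ sign_pos hu)
    exact ⟨v / u, div_pos hv hu, (div_mul_cancel₀ v hu.ne').symm⟩

lemma sign_eq_sign_iff_exists_pos_mul {ι : Type*} (w z : ι → ℝ) :
    (∀ i, sign (w i) = sign (z i)) ↔ ∃ lam : ι → ℝ, (∀ i, 0 < lam i) ∧ w = lam * z := by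
  constructor
  · intro h
    choose lam hlam hw using fun i => exists_pos_mul_eq_of_sign_eq (h i).symm
    exact ⟨lam, hlam, funext hw⟩
  · rintro ⟨lam, hlam, rfl⟩ i
    rw [Pi.mul_apply, sign_mul, sign_pos (hlam i), one_mul]

lemma sign_log_sub_log {a b : ℝ} (ha : 0 < a) (hb : 0 < b) :
    sign (Real.log a - Real.log b) = sign (a - b) := by
  rcases lt_trichotomy a b with h | rfl | h
  · rw [sign_neg (sub_neg.mpr h), sign_neg (sub_neg.mpr (Real.log_lt_log ha h))]
  · simp
  · rw [sign_pos (sub_pos.mpr h), sign_pos (sub_pos.mpr (Real.log_lt_log hb h))]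

lemma exists_sub_eq_and_log_sub_eq {u v : ℝ} (h : sign u = sign v) :
    ∃ a b, 0 < a ∧ 0 < b ∧ a - b = u ∧ Real.log a - Real.log b = v := by
  have hexp : sign u = sign (Real.exp v - 1) := by
    rw [h, ← sign_log_sub_log (Real.exp_pos v) one_pos, Real.log_exp, Real.log_one, sub_zero]
  obtain ⟨c, hc, hcu⟩ := exists_pos_mul_eq_of_sign_eq hexp
  -- `b = u / (eᵛ - 1) = c⁻¹` and `a = b eᵛ`
  refine ⟨c⁻¹ * Real.exp v, c⁻¹, by positivity, inv_pos.mpr hc, ?_, ?_⟩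
  · rw [← mul_sub_one, hcu, inv_mul_cancel_left₀ hc.ne']
  · rw [Real.log_mul (inv_ne_zero hc.ne') (Real.exp_ne_zero v), Real.log_exp, add_sub_cancel_left]

lemma sgnSet_inter_nonempty_iff {n : ℕ} (K T : Set (Fin n → ℝ)) :
    (sgnSet K ∩ sgnSet T).Nonempty ↔ ∃ w ∈ K, ∃ z ∈ T, ∀ i, sign (w i) = sign (z i) := by
  constructor
  · rintro ⟨-, ⟨w, hw, rfl⟩, ⟨z, hz, hwz⟩⟩
    exact ⟨w, hw, z, hz, fun i => (congrFun hwz i).symm⟩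
  · rintro ⟨w, hw, z, hz, hwz⟩
    exact ⟨_, ⟨w, hw, rfl⟩, ⟨z, hz, (funext hwz).symm⟩⟩

lemma diagonal_mul_mul_diagonal_mulVec {n r : ℕ} (κ : Fin r → ℝ) (B : Matrix (Fin r) (Fin n) ℝ)
    (lam z : Fin n → ℝ) :
    (Matrix.diagonal κ * B * Matrix.diagonal lam) *ᵥ z = κ * (B *ᵥ (lam * z)) := by
  ext j
  simp only [← Matrix.mulVec_mulVec, Matrix.mulVec_diagonal, Pi.mul_apply]
  congr 2
  exact funext fun i => Matrix.mulVec_diagonal lam z i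

lemma zero_mem_matImage_qSet_iff {n r : ℕ} (B : Matrix (Fin r) (Fin n) ℝ)
    (T : Set (Fin n → ℝ)) :
    (0 : Fin r → ℝ) ∈ matImage (qSet B) T ↔ (sgnSet {w | B *ᵥ w = 0} ∩ sgnSet T).Nonempty := by
  rw [sgnSet_inter_nonempty_iff]
  constructor
  · rintro ⟨-, ⟨κ, lam, hκ, hlam, rfl⟩, z, hz, h0⟩
    rw [diagonal_mul_mul_diagonal_mulVec] at h0
    have hker : B *ᵥ (lam * z) = 0 := funext fun j =>
      (mul_eq_zero.mp (congrFun h0 j).symm).resolve_left (hκ j).ne'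
    exact ⟨lam * z, hker, z, hz, (sign_eq_sign_iff_exists_pos_mul _ z).mpr ⟨lam, hlam, rfl⟩⟩
  · rintro ⟨w, hw, z, hz, hwz⟩
    obtain ⟨lam, hlam, rfl⟩ := (sign_eq_sign_iff_exists_pos_mul w z).mp hwz
    refine ⟨_, ⟨1, lam, fun _ => one_pos, hlam, rfl⟩, z, hz, ?_⟩
    rw [diagonal_mul_mul_diagonal_mulVec, hw, mul_zero]

lemma monMap_eq_exp_mulVec_log {n r : ℕ} (B : Matrix (Fin r) (Fin n) ℝ) {x : Fin n → ℝ}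
    (hx : x ∈ posOrth n) (j : Fin r) :
    monMap B x j = Real.exp ((B *ᵥ fun i => Real.log (x i)) j) := by
  rw [Matrix.mulVec, dotProduct, Real.exp_sum, monMap]
  exact Finset.prod_congr rfl fun i _ => by rw [Real.rpow_def_of_pos (hx i), mul_comm]

lemma monMap_eq_monMap_iff {n r : ℕ} (B : Matrix (Fin r) (Fin n) ℝ) {x y : Fin n → ℝ}
    (hx : x ∈ posOrth n) (hy : y ∈ posOrth n) :
    monMap B x = monMap B y ↔ B *ᵥ (fun i => Real.log (x i) - Real.log (y i)) = 0 := by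
  have hsub : (fun i => Real.log (x i) - Real.log (y i)) =
      (fun i => Real.log (x i)) - fun i => Real.log (y i) := rfl
  rw [hsub, Matrix.mulVec_sub, sub_eq_zero, funext_iff, funext_iff]
  simp only [monMap_eq_exp_mulVec_log B hx, monMap_eq_exp_mulVec_log B hy, Real.exp_eq_exp]

lemma injOnCosets_mSet_iff {n r : ℕ} (B : Matrix (Fin r) (Fin n) ℝ) (S : Submodule ℝ (Fin n → ℝ)) :
    InjOnCosets (posOrth n) S (mSet B) ↔ ∀ x ∈ posOrth n, ∀ y ∈ posOrth n,
      x - y ∈ S → monMap B x = monMap B y → x = y := by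
  constructor
  · intro h x hx y hy hxy hmon
    refine h _ ⟨1, fun _ => one_pos, rfl⟩ y hy ⟨hxy, hx⟩ ⟨by simp, hy⟩ ?_
    simp only [hmon]
  · rintro h - ⟨κ, hκ, rfl⟩ x₀ - x ⟨hx₀, hx⟩ y ⟨hy₀, hy⟩ hG
    refine h x hx y hy (by simpa using S.sub_mem hx₀ hy₀) (funext fun j => ?_)
    exact mul_left_cancel₀ (hκ j).ne' (congrFun hG j)

lemma not_injOnCosets_mSet_iff {n r : ℕ} (B : Matrix (Fin r) (Fin n) ℝ)
    (S : Submodule ℝ (Fin n → ℝ)) :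
    ¬ InjOnCosets (posOrth n) S (mSet B) ↔
      (sgnSet {w | B *ᵥ w = 0} ∩ sgnSet ((S : Set (Fin n → ℝ)) \ {0})).Nonempty := by
  rw [injOnCosets_mSet_iff, sgnSet_inter_nonempty_iff]
  constructor
  · intro h
    push Not at h
    obtain ⟨x, hx, y, hy, hxy, hmon, hne⟩ := h
    exact ⟨_, (monMap_eq_monMap_iff B hx hy).mp hmon, x - y, ⟨hxy, sub_ne_zero.mpr hne⟩,
      fun i => sign_log_sub_log (hx i) (hy i)⟩
  · rintro ⟨w, hw, z, ⟨hzS, hz0⟩, hwz⟩ hinj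
    choose x y hx hy hxy hlog using fun i => exists_sub_eq_and_log_sub_eq (hwz i).symm
    have hxy' : x - y = z := funext hxy
    have hmon : monMap B x = monMap B y := by
      rw [monMap_eq_monMap_iff B hx hy, funext hlog]
      exact hw
    have hxy_eq : x = y := hinj x hx y hy (hxy' ▸ hzS) hmon
    exact hz0 (Set.mem_singleton_iff.mpr (by rw [← hxy', hxy_eq, sub_self]))

/-- `m(B)` is injective w.r.t. `S` iff `0 ∉ q(B)(S \ {0})` iff
`σ(ker B) ∩ σ(S \ {0}) = ∅`. -/
theorem stmt13 {n r : ℕ} (B : Matrix (Fin r) (Fin n) ℝ) (S : Submodule ℝ (Fin n → ℝ)) :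
    (InjOnCosets (posOrth n) S (mSet B) ↔
      (0 : Fin r → ℝ) ∉ matImage (qSet B) ((S : Set (Fin n → ℝ)) \ {0})) ∧
    ((0 : Fin r → ℝ) ∉ matImage (qSet B) ((S : Set (Fin n → ℝ)) \ {0}) ↔
      sgnSet {z | B.mulVec z = 0} ∩ sgnSet ((S : Set (Fin n → ℝ)) \ {0}) = ∅) := by
  rw [zero_mem_matImage_qSet_iff, ← Set.not_nonempty_iff_eq_empty,
    ← not_injOnCosets_mSet_iff]
  simp only [not_not, iff_self, and_self]
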